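/- Let w > 0 and l > 0 be real constants. Let μ₀ be a finite Borel measure on ℝ supported in [0,l], let μ_in and μ_b be finite Borel measures on ℝ supported in [0,∞), and let μ_a be a finite Borel measure on ℝ supported in [0,∞) with μ_a ≤ θ#μ₀ + σ#(μ_in + μ_b), where θ(y) = (l − y)/w, σ(s) = s + l/w and # denotes pushforward of measures. Define ν := T₀(μ₀) + T_b(μ_in) + T_b(μ_b) and the outflow measure ν̃_out := θ#μ₀ + σ#(μ_in + μ_b) − μ_a. Then for every continuously differentiable compactly supported function φ : ℝ² → ℝ, ∫_{ℝ²} ( ∂_tφ + w·∂_xφ ) dν + ∫_ℝ φ(y,0) dμ₀(y) + ∫_ℝ φ(0,s) dμ_in(s) + ∫_ℝ φ(0,s) dμ_b(s) − ∫_ℝ φ(l,s) dν̃_out(s) − ∫_ℝ φ(l,s) dμ_a(s) = 0; that is, ν is a weak measure-valued solution of the tram problem on one edge in the sense of Definition 3.4, with initial datum μ₀, inflow measure μ_in at x = 0, boarding measure μ_b, alighting measure μ_a and outflow trace ν̃_out at x = l. -/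

import Mathlib

open MeasureTheory

/-- The interior transport measure from an initial datum `μ₀` supported in `[0,l]`:
the pushforward under `(y,t) ↦ (y + t·w, t)` of the restriction of `μ₀ ⊗ Leb`
to `{(y,t) : 0 ≤ t ≤ (l − y)/w}`. -/
noncomputable def T0 (w l : ℝ) (μ₀ : MeasureTheory.Measure ℝ) :
    MeasureTheory.Measure (ℝ × ℝ) :=
  Measure.map (fun p : ℝ × ℝ => (p.1 + p.2 * w, p.2))
    ((μ₀.prod volume).restrict {p : ℝ × ℝ | 0 ≤ p.2 ∧ p.2 ≤ (l - p.1) / w})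

/-- The interior transport measure from a boundary datum `μ` supported in `[0,∞)`:
the pushforward under `(s,t) ↦ ((t − s)·w, t)` of the restriction of `μ ⊗ Leb`
to `{(s,t) : s ≤ t ≤ s + l/w}`. -/
noncomputable def Tb (w l : ℝ) (μ : MeasureTheory.Measure ℝ) :
    MeasureTheory.Measure (ℝ × ℝ) :=
  Measure.map (fun p : ℝ × ℝ => ((p.2 - p.1) * w, p.2))
    ((μ.prod volume).restrict {p : ℝ × ℝ | p.1 ≤ p.2 ∧ p.2 ≤ p.1 + l / w})

/-!
Along each characteristic `t ↦ (x + t w, t)` the transport derivative `∂ₜφ + w ∂ₓφ` is the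
derivative of `t ↦ φ (x + t w, t)`. By Fubini and the fundamental theorem of calculus, integrating
it against `T₀(μ₀)` or `T_b(μ)` therefore leaves only the values of `φ` where the characteristics
start (at `t = 0`, or at `x = 0`) and where they reach `x = l`, at the times `θ(y)` and `σ(s)`.
The latter make up the integral of `φ(l, ·)` against `θ#μ₀ + σ#(μ_in + μ_b)`, which
`ν̃_out + μ_a` recovers exactly because `μ_a` is dominated by it.
-/

open Set Function Topology

lemma HasCompactSupport.integrable_comp {X Y : Type*} [MeasurableSpace X] [TopologicalSpace Y]
    [MeasurableSpace Y] [OpensMeasurableSpace Y] {μ : Measure X} [IsFiniteMeasure μ] {φ : Y → ℝ}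
    (hφ : Continuous φ) (hφc : HasCompactSupport φ) {g : X → Y}
    (hg : Measurable g) : Integrable (fun x => φ (g x)) μ := by
  obtain ⟨C, hC⟩ := hφc.exists_bound_of_continuous hφ
  exact .of_bound (hφ.measurable.comp hg).aestronglyMeasurable C (ae_of_all _ fun x => hC _)

variable {E : Type*} [NormedAddCommGroup E] [NormedSpace ℝ E] {φ : E → ℝ}

lemma intervalIntegral_fderiv_comp_eq_sub (hφ : ContDiff ℝ 1 φ) {γ : ℝ → E} {v : E}
    (hγ : ∀ t, HasDerivAt γ v t) (a b : ℝ) :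
    ∫ t in a..b, fderiv ℝ φ (γ t) v = φ (γ b) - φ (γ a) := by
  have hγc : Continuous γ := continuous_iff_continuousAt.2 fun t => (hγ t).continuousAt
  refine intervalIntegral.integral_eq_sub_of_hasDerivAt (f := fun t => φ (γ t)) (fun t _ => ?_) ?_
  · exact ((hφ.differentiable one_ne_zero) (γ t)).hasFDerivAt.comp_hasDerivAt t (hγ t)
  · exact (((hφ.continuous_fderiv one_ne_zero).clm_apply continuous_const).comp
      hγc).intervalIntegrable _ _

section Characteristics

variable {G : ℝ × ℝ → E} {v : E} {μ : Measure ℝ} [IsLocallyFiniteMeasure μ]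

lemma integrable_fderiv_comp_prod (hφ : ContDiff ℝ 1 φ) (hφc : HasCompactSupport φ)
    (hG : IsClosedEmbedding G) :
    Integrable (fun p => fderiv ℝ φ (G p) v) (μ.prod volume) :=
  (((hφ.continuous_fderiv one_ne_zero).clm_apply continuous_const).comp
    hG.continuous).integrable_of_hasCompactSupport
      ((hφc.fderiv_apply ℝ v).comp_isClosedEmbedding hG)

variable [MeasurableSpace E] [BorelSpace E]

lemma integrable_fderiv_map_prod_restrict (hφ : ContDiff ℝ 1 φ) (hφc : HasCompactSupport φ)
    (hG : IsClosedEmbedding G) (S : Set (ℝ × ℝ)) :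
    Integrable (fun p => fderiv ℝ φ p v) (((μ.prod volume).restrict S).map G) :=
  (integrable_map_measure ((hφ.continuous_fderiv one_ne_zero).clm_apply
    continuous_const).aestronglyMeasurable hG.continuous.aemeasurable).2
      (integrable_fderiv_comp_prod hφ hφc hG).restrict

lemma integral_fderiv_map_prod_restrict (hφ : ContDiff ℝ 1 φ) (hφc : HasCompactSupport φ)
    (hG : IsClosedEmbedding G) (hGv : ∀ y t, HasDerivAt (fun t => G (y, t)) v t)
    {α β : ℝ → ℝ} (hα : Measurable α) (hβ : Measurable β) (hαβ : ∀ᵐ y ∂μ, α y ≤ β y) :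
    ∫ p, fderiv ℝ φ p v
        ∂(((μ.prod volume).restrict {p | α p.1 ≤ p.2 ∧ p.2 ≤ β p.1}).map G)
      = ∫ y, (φ (G (y, β y)) - φ (G (y, α y))) ∂μ := by
  set S : Set (ℝ × ℝ) := {p | α p.1 ≤ p.2 ∧ p.2 ≤ β p.1}
  have hF : Continuous fun p => fderiv ℝ φ p v :=
    (hφ.continuous_fderiv one_ne_zero).clm_apply continuous_const
  have hS : MeasurableSet S :=
    (measurableSet_le (hα.comp measurable_fst) measurable_snd).inter
      (measurableSet_le measurable_snd (hβ.comp measurable_fst))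
  rw [integral_map hG.continuous.aemeasurable hF.aestronglyMeasurable, ← integral_indicator hS,
    integral_prod _ ((integrable_fderiv_comp_prod hφ hφc hG).indicator hS)]
  refine integral_congr_ae (hαβ.mono fun y hy => ?_)
  have hsection : (fun t => S.indicator (fun p => fderiv ℝ φ (G p) v) (y, t))
      = (Icc (α y) (β y)).indicator (fun t => fderiv ℝ φ (G (y, t)) v) := by
    ext t
    simp only [S, indicator_apply, mem_ofPred_eq, mem_Icc]
  dsimp only
  rw [hsection, integral_indicator measurableSet_Icc, integral_Icc_eq_integral_Ioc,
    ← intervalIntegral.integral_of_le hy]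
  exact intervalIntegral_fderiv_comp_eq_sub hφ (hGv y) _ _

end Characteristics

section Tram

variable {w l : ℝ} {φ : ℝ × ℝ → ℝ}

lemma ContinuousLinearMap.apply_zero_one_add_mul_apply_one_zero (L : ℝ × ℝ →L[ℝ] ℝ) (w : ℝ) :
    L (0, 1) + w * L (1, 0) = L (w, 1) := by
  have hv : ((w, 1) : ℝ × ℝ) = w • (1, 0) + (0, 1) := by ext <;> simp
  rw [hv, map_add, map_smul, smul_eq_mul, add_comm]

lemma isClosedEmbedding_T0_map (w : ℝ) :
    IsClosedEmbedding fun p : ℝ × ℝ => (p.1 + p.2 * w, p.2) :=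
  LeftInverse.isClosedEmbedding (f := fun q : ℝ × ℝ => (q.1 - q.2 * w, q.2))
    (fun p => by simp) (by fun_prop) (by fun_prop)

lemma isClosedEmbedding_Tb_map (hw : w ≠ 0) :
    IsClosedEmbedding fun p : ℝ × ℝ => ((p.2 - p.1) * w, p.2) :=
  LeftInverse.isClosedEmbedding (f := fun q : ℝ × ℝ => (q.2 - q.1 / w, q.2))
    (fun p => by simp [hw]) (by fun_prop) (by fun_prop)

lemma hasDerivAt_T0_map (y t : ℝ) : HasDerivAt (fun t => (y + t * w, t)) (w, 1) t :=
  ((hasDerivAt_mul_const w).const_add y).prodMk (hasDerivAt_id t)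

lemma hasDerivAt_Tb_map (s t : ℝ) : HasDerivAt (fun t => ((t - s) * w, t)) (w, 1) t := by
  simpa using (((hasDerivAt_id t).sub_const s).mul_const w).prodMk (hasDerivAt_id t)

variable (hφ : ContDiff ℝ 1 φ) (hφc : HasCompactSupport φ) (μ : Measure ℝ)
include hφ hφc

lemma integrable_fderiv_T0 [IsLocallyFiniteMeasure μ] : Integrable (fun p => fderiv ℝ φ p (w, 1)) (T0 w l μ) :=
  integrable_fderiv_map_prod_restrict hφ hφc (isClosedEmbedding_T0_map w) _

lemma integrable_fderiv_Tb [IsLocallyFiniteMeasure μ] (hw : w ≠ 0) : Integrable (fun p => fderiv ℝ φ p (w, 1)) (Tb w l μ) :=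
  integrable_fderiv_map_prod_restrict hφ hφc (isClosedEmbedding_Tb_map hw) _

lemma integral_fderiv_T0 [IsFiniteMeasure μ] (hw : 0 < w) (hμ : ∀ᵐ y ∂μ, y ≤ l) :
    ∫ p, fderiv ℝ φ p (w, 1) ∂(T0 w l μ) = ∫ y, φ (l, (l - y) / w) ∂μ - ∫ y, φ (y, 0) ∂μ := by
  have hθ : ∀ᵐ y ∂μ, 0 ≤ (l - y) / w :=
    hμ.mono fun y hy => div_nonneg (sub_nonneg.2 hy) hw.le
  rw [T0, integral_fderiv_map_prod_restrict (α := fun _ => 0) (β := fun y => (l - y) / w) hφ hφc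
    (isClosedEmbedding_T0_map w) hasDerivAt_T0_map measurable_const (by fun_prop) hθ,
    ← integral_sub (hφc.integrable_comp hφ.continuous (by fun_prop))
      (hφc.integrable_comp hφ.continuous (by fun_prop))]
  congr! with y
  · field_simp; ring
  · simp

lemma integral_fderiv_Tb [IsFiniteMeasure μ] (hw : 0 < w) (hl : 0 ≤ l) :
    ∫ p, fderiv ℝ φ p (w, 1) ∂(Tb w l μ) = ∫ s, φ (l, s + l / w) ∂μ - ∫ s, φ (0, s) ∂μ := by
  have hσ : ∀ᵐ s ∂μ, s ≤ s + l / w := ae_of_all _ fun s => le_add_of_nonneg_right (by positivity)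
  rw [Tb, integral_fderiv_map_prod_restrict (α := fun s => s) (β := fun s => s + l / w) hφ hφc
    (isClosedEmbedding_Tb_map hw.ne') hasDerivAt_Tb_map measurable_id (by fun_prop) hσ,
    ← integral_sub (hφc.integrable_comp hφ.continuous (by fun_prop))
      (hφc.integrable_comp hφ.continuous (by fun_prop))]
  congr! with s
  · field_simp; ring
  · simp

end Tram

theorem weak_solution_one_edge_general (w l : ℝ) (hw : 0 < w) (hl : 0 < l)
    (μ₀ μin μb μa : Measure ℝ)
    [IsFiniteMeasure μ₀] [IsFiniteMeasure μin] [IsFiniteMeasure μb]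
    [IsFiniteMeasure μa]
    (hμ₀ : μ₀ ((Set.Icc (0 : ℝ) l)ᶜ) = 0)
    (hμa_le : μa ≤ Measure.map (fun y => (l - y) / w) μ₀
        + Measure.map (fun s => s + l / w) (μin + μb)) :
    ∀ φ : ℝ × ℝ → ℝ, ContDiff ℝ 1 φ → HasCompactSupport φ →
      ∫ p, (fderiv ℝ φ p (0, 1) + w * fderiv ℝ φ p (1, 0))
          ∂(T0 w l μ₀ + Tb w l μin + Tb w l μb)
        + ∫ y, φ (y, 0) ∂μ₀
        + ∫ s, φ (0, s) ∂μin
        + ∫ s, φ (0, s) ∂μb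
        - ∫ s, φ (l, s)
            ∂((Measure.map (fun y => (l - y) / w) μ₀
                + Measure.map (fun s => s + l / w) (μin + μb)) - μa)
        - ∫ s, φ (l, s) ∂μa = 0 := by
  intro φ hφ hφc
  have hμ₀l : ∀ᵐ y ∂μ₀, y ≤ l := by
    filter_upwards [mem_ae_iff.2 hμ₀] with y hy using hy.2
  have hφl {ν : Measure ℝ} [IsFiniteMeasure ν] : Integrable (fun s => φ (l, s)) ν :=
    hφc.integrable_comp hφ.continuous (by fun_prop)
  have houtflow : ∫ s, φ (l, s)
        ∂((Measure.map (fun y => (l - y) / w) μ₀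
          + Measure.map (fun s => s + l / w) (μin + μb)) - μa) + ∫ s, φ (l, s) ∂μa
      = ∫ y, φ (l, (l - y) / w) ∂μ₀ + ∫ s, φ (l, s + l / w) ∂μin
        + ∫ s, φ (l, s + l / w) ∂μb := by
    rw [← integral_add_measure hφl hφl, Measure.sub_add_cancel_of_le hμa_le,
      integral_add_measure hφl hφl, integral_map (by fun_prop) hφl.1,
      integral_map (by fun_prop) hφl.1,
      integral_add_measure (hφc.integrable_comp hφ.continuous (by fun_prop))
        (hφc.integrable_comp hφ.continuous (by fun_prop)), add_assoc]
  simp_rw [ContinuousLinearMap.apply_zero_one_add_mul_apply_one_zero]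
  rw [integral_add_measure ((integrable_fderiv_T0 hφ hφc μ₀).add_measure
      (integrable_fderiv_Tb hφ hφc μin hw.ne')) (integrable_fderiv_Tb hφ hφc μb hw.ne'),
    integral_add_measure (integrable_fderiv_T0 hφ hφc μ₀) (integrable_fderiv_Tb hφ hφc μin hw.ne'),
    integral_fderiv_T0 hφ hφc μ₀ hw hμ₀l, integral_fderiv_Tb hφ hφc μin hw hl.le,
    integral_fderiv_Tb hφ hφc μb hw hl.le]
  linarith

/-- Existence part of Theorem 3.2: the measure `ν = T₀(μ₀) + T_b(μ_in) + T_b(μ_b)`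
built from the solution formula (3.13) is a weak measure-valued solution of the
tram problem on one edge (Definition 3.4), with outflow trace
`ν̃_out = θ#μ₀ + σ#(μ_in + μ_b) − μ_a`. -/
theorem weak_solution_one_edge (w l : ℝ) (hw : 0 < w) (hl : 0 < l)
    (μ₀ μin μb μa : Measure ℝ)
    [IsFiniteMeasure μ₀] [IsFiniteMeasure μin] [IsFiniteMeasure μb]
    [IsFiniteMeasure μa]
    (hμ₀ : μ₀ ((Set.Icc (0 : ℝ) l)ᶜ) = 0)
    (hμin : μin ((Set.Ici (0 : ℝ))ᶜ) = 0)
    (hμb : μb ((Set.Ici (0 : ℝ))ᶜ) = 0)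
    (hμa : μa ((Set.Ici (0 : ℝ))ᶜ) = 0)
    (hμa_le : μa ≤ Measure.map (fun y => (l - y) / w) μ₀
        + Measure.map (fun s => s + l / w) (μin + μb)) :
    ∀ φ : ℝ × ℝ → ℝ, ContDiff ℝ 1 φ → HasCompactSupport φ →
      ∫ p, (fderiv ℝ φ p (0, 1) + w * fderiv ℝ φ p (1, 0))
          ∂(T0 w l μ₀ + Tb w l μin + Tb w l μb)
        + ∫ y, φ (y, 0) ∂μ₀
        + ∫ s, φ (0, s) ∂μin
        + ∫ s, φ (0, s) ∂μb
        - ∫ s, φ (l, s)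
            ∂((Measure.map (fun y => (l - y) / w) μ₀
                + Measure.map (fun s => s + l / w) (μin + μb)) - μa)
        - ∫ s, φ (l, s) ∂μa = 0 :=
  weak_solution_one_edge_general w l hw hl μ₀ μin μb μa hμ₀ hμa_le
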